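/- arXiv:2203.15094 — 5 statements merged into one kernel-verified Lean document; each statement's English description precedes it below -/
import Mathlib

section
/- Let (S, ρ) be a matroid scheme. Then: (1) if x ∈ S, a is an atom of S, and u ∈ x∨a, then ρ(x) ≤ ρ(u) ≤ ρ(x)+1; (2) if T ⊆ S and u, v are both minimal upper bounds of T in S, then ρ(u) = ρ(v); (3) ρ takes the same value on all maximal elements of S. -/
/-- The set of minimal upper bounds of `x` and `y` (denoted `x ∨ y` in the paper). -/
def mub {S : Type*} [PartialOrder S] (x y : S) : Set S :=
  {u | x ≤ u ∧ y ≤ u ∧ ∀ v, x ≤ v → y ≤ v → v ≤ u → v = u}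

/-- The set of maximal lower bounds of `x` and `y` (denoted `x ∧ y` in the paper). -/
def mlb {S : Type*} [PartialOrder S] (x y : S) : Set S :=
  {l | l ≤ x ∧ l ≤ y ∧ ∀ m, m ≤ x → m ≤ y → l ≤ m → m = l}

/-- The set of minimal upper bounds of a subset `T`. -/
def mubSet {S : Type*} [PartialOrder S] (T : Set S) : Set S :=
  {u | (∀ t ∈ T, t ≤ u) ∧ ∀ v, (∀ t ∈ T, t ≤ v) → v ≤ u → v = u}

/-- The number of atoms below `x`, i.e. `|x|`, the rank of `x` in a simplicial poset. -/
noncomputable def natRank {S : Type*} [PartialOrder S] [OrderBot S] (x : S) : ℕ :=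
  Nat.card {a : S // IsAtom a ∧ a ≤ x}

/-- A finite bounded-below poset is simplicial if every lower interval is isomorphic to
the Boolean lattice of subsets of the set of atoms below. -/
def IsSimplicialPoset (S : Type*) [PartialOrder S] [OrderBot S] [Fintype S] : Prop :=
  ∀ x : S, Nonempty (Set.Iic x ≃o Set {a : S // IsAtom a ∧ a ≤ x})

/-- A matroid scheme: a rank function `ρ` on a finite simplicial poset `S`
satisfying (M1)–(M5). -/
structure IsMatroidScheme {S : Type*} [PartialOrder S] [OrderBot S] [Fintype S]
    (ρ : S → ℕ) : Prop where
  simplicial : IsSimplicialPoset S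
  M1 : ∀ x : S, ρ x ≤ natRank x
  M2 : ∀ ⦃x y : S⦄, x ≤ y → ρ x ≤ ρ y
  M3 : ∀ x y u l : S, u ∈ mub x y → l ∈ mlb x y → ρ u + ρ l ≤ ρ x + ρ y
  M4 : ∀ x y l : S, l ∈ mlb x y → ρ x = ρ l → (mub x y).Nonempty
  M5 : ∀ x y : S, ρ x < ρ y →
    ∃ a : S, IsAtom a ∧ a ≤ y ∧ ¬ a ≤ x ∧ (mub x a).Nonempty

/-- `cl` is the closure operator of a matroid scheme `(S, ρ)`:
`cl x` is the greatest element above `x` of the same rank. -/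
def IsClosureFun {S : Type*} [PartialOrder S] (ρ : S → ℕ) (cl : S → S) : Prop :=
  ∀ x : S, x ≤ cl x ∧ ρ (cl x) = ρ x ∧ ∀ y : S, x ≤ y → ρ y = ρ x → y ≤ cl x

/-- The bases of a matroid scheme: the maximal independent elements. -/
def Bases {S : Type*} [PartialOrder S] [OrderBot S] (ρ : S → ℕ) : Set S :=
  {x | ρ x = natRank x ∧ ∀ w, ρ w = natRank w → x ≤ w → w = x}

/-- The circuits of a matroid scheme: the minimal dependent elements. -/
def Circuits {S : Type*} [PartialOrder S] [OrderBot S] (ρ : S → ℕ) : Set S :=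
  {x | ρ x < natRank x ∧ ∀ y, ρ y < natRank y → y ≤ x → y = x}

/-- `c` is the complement `x ∖ a` of `a` in the Boolean lattice `S_{≤ x}`. -/
def IsComplementIn {S : Type*} [PartialOrder S] [OrderBot S] (c a x : S) : Prop :=
  c ≤ x ∧ a ≤ x ∧ (∀ l : S, l ≤ c → l ≤ a → l = ⊥) ∧
    (∀ u : S, u ≤ x → c ≤ u → a ≤ u → u = x)

/-- The rank of a matroid scheme: the common value of `ρ` on maximal elements
(equal to the maximum value of `ρ`). -/
noncomputable def schemeRank {S : Type*} [Fintype S] (ρ : S → ℕ) : ℕ :=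
  sSup (Set.range ρ)

/-- The Tutte polynomial of a matroid scheme, as a two-variable integer function. -/
noncomputable def tutte {S : Type*} [PartialOrder S] [OrderBot S] [Fintype S]
    (ρ : S → ℕ) (x y : ℤ) : ℤ :=
  ∑ w : S, (x - 1) ^ (schemeRank ρ - ρ w) * (y - 1) ^ (natRank w - ρ w)

/-- An element of a poset is an order-atom if it covers a global minimum. -/
def OrdAtom {P : Type*} [PartialOrder P] (a : P) : Prop :=
  ∃ b : P, (∀ z : P, b ≤ z) ∧ b ⋖ a

/-- A partial order is a geometric lattice: it is bounded below, every pair has a least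
upper bound and greatest lower bound, it is atomistic, and it is (upper) semimodular. -/
def IsGeomLatOrder (P : Type*) [PartialOrder P] : Prop :=
  (∃ b : P, ∀ x : P, b ≤ x) ∧
  (∀ x y : P, ∃ u : P, IsLUB {x, y} u) ∧
  (∀ x y : P, ∃ l : P, IsGLB {x, y} l) ∧
  (∀ x : P, IsLUB {a : P | OrdAtom a ∧ a ≤ x} x) ∧
  (∀ x y m j : P, IsGLB {x, y} m → IsLUB {x, y} j → m ⋖ x → y ⋖ j)

/-- A geometric poset: a finite bounded-below poset with rank function `rk`
satisfying (G1) and (G2). -/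
def IsGeometricPoset (P : Type*) [PartialOrder P] [OrderBot P] [Fintype P]
    (rk : P → ℕ) : Prop :=
  rk ⊥ = 0 ∧
  (∀ ⦃x y : P⦄, x ≤ y → rk x ≤ rk y) ∧
  (∀ x y : P, x ⋖ y → rk y = rk x + 1) ∧
  (∀ m : P, IsMax m → IsGeomLatOrder (Set.Iic m)) ∧
  (∀ (x : P) (A : Set P), (∀ a ∈ A, IsAtom a) →
    ∀ y ∈ mubSet A, rk x < rk y → rk y = Nat.card A →
      ∃ a ∈ A, ¬ a ≤ x ∧ ∃ w : P, x ≤ w ∧ a ≤ w)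


/-- In a simplicial poset, for any atom `a ≤ v` there is a "complement of `a` in `v`":
an element `c ≤ v`, `c ≠ v`, such that the elements of `[⊥,v]` below `c` are exactly
those not above `a`. -/
lemma exists_compl_atom {S : Type*} [PartialOrder S] [OrderBot S] [Fintype S]
    (hs : IsSimplicialPoset S) {v a : S} (ha : IsAtom a) (hav : a ≤ v) :
    ∃ c : S, c ≤ v ∧ c ≠ v ∧ ∀ t : S, t ≤ v → (t ≤ c ↔ ¬ a ≤ t) := by
  obtain ⟨φ⟩ := hs v
  have haI : IsAtom (⟨a, hav⟩ : Set.Iic v) := by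
    constructor
    · intro hbot
      exact ha.1 (congrArg Subtype.val hbot)
    · intro b hb
      have hb' : (b : S) < a := hb
      exact Subtype.ext (ha.2 _ hb')
  have haφ : IsAtom (φ ⟨a, hav⟩) := (φ.isAtom_iff _).2 haI
  obtain ⟨s0, hs0⟩ := Set.isAtom_iff.1 haφ
  set c : Set.Iic v := φ.symm {s0}ᶜ with hc
  have key : ∀ t : Set.Iic v, t ≤ c ↔ ¬ a ≤ (t : S) := by
    intro t
    have h1 : t ≤ c ↔ φ t ≤ {s0}ᶜ := by
      rw [hc, φ.le_symm_apply]
    have h2 : φ t ≤ ({s0}ᶜ : Set _) ↔ s0 ∉ φ t := Set.subset_compl_singleton_iff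
    have h3 : s0 ∈ φ t ↔ φ ⟨a, hav⟩ ≤ φ t := by
      rw [hs0]; exact Set.singleton_subset_iff.symm
    have h4 : φ ⟨a, hav⟩ ≤ φ t ↔ a ≤ (t : S) := by
      rw [φ.le_iff_le]; rfl
    rw [h1, h2, ← h4, ← h3]
  have hcv : (c : S) ≤ v := c.2
  have hcne : (c : S) ≠ v := by
    intro hcveq
    have : ¬ a ≤ (c : S) := (key c).1 le_rfl
    rw [hcveq] at this; exact this hav
  refine ⟨c, hcv, hcne, fun t htv => ?_⟩
  have := key ⟨t, htv⟩
  exact this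

/-- Every atom below a minimal upper bound of `T` lies below some element of `T`. -/
lemma atom_le_of_mem_mubSet {S : Type*} [PartialOrder S] [OrderBot S] [Fintype S]
    (hs : IsSimplicialPoset S) {T : Set S} {v a : S} (hv : v ∈ mubSet T)
    (ha : IsAtom a) (hav : a ≤ v) : ∃ t ∈ T, a ≤ t := by
  by_contra hcon
  push_neg at hcon
  obtain ⟨c, hcv, hcne, hkey⟩ := exists_compl_atom hs ha hav
  have hub : ∀ t ∈ T, t ≤ c := fun t ht =>
    (hkey t (hv.1 t ht)).2 (hcon t ht)
  have : c = v := hv.2 c hub hcv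
  exact hcne this

lemma natRank_atom {S : Type*} [PartialOrder S] [OrderBot S] {a : S}
    (ha : IsAtom a) : natRank a = 1 := by
  have huniq : ∀ b : {b : S // IsAtom b ∧ b ≤ a}, b = (⟨a, ha, le_rfl⟩ : {b : S // IsAtom b ∧ b ≤ a}) := by
    rintro ⟨b, hb, hba⟩
    rcases hba.lt_or_eq with hlt | heq
    · exact absurd (ha.2 b hlt) hb.1
    · exact Subtype.ext heq
  haveI : Unique {b : S // IsAtom b ∧ b ≤ a} :=
    { default := ⟨a, ha, le_rfl⟩, uniq := huniq }
  exact Nat.card_unique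

/-- Proposition 4.7 (rank properties of a matroid scheme). -/
theorem statement0 {S : Type*} [PartialOrder S] [OrderBot S] [Fintype S]
    (ρ : S → ℕ) (h : IsMatroidScheme ρ) :
    (∀ x a u : S, IsAtom a → u ∈ mub x a → ρ x ≤ ρ u ∧ ρ u ≤ ρ x + 1) ∧
    (∀ (T : Set S) (u v : S), u ∈ mubSet T → v ∈ mubSet T → ρ u = ρ v) ∧
    (∀ u v : S, IsMax u → IsMax v → ρ u = ρ v) := by
  have part1 : ∀ x a u : S, IsAtom a → u ∈ mub x a → ρ x ≤ ρ u ∧ ρ u ≤ ρ x + 1 := by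
    intro x a u ha hu
    refine ⟨h.M2 hu.1, ?_⟩
    by_cases hax : a ≤ x
    · have hmlb : a ∈ mlb x a :=
        ⟨hax, le_rfl, fun m _ hma ham => le_antisymm hma ham⟩
      have := h.M3 x a u a hu hmlb
      omega
    · have hmlb : (⊥ : S) ∈ mlb x a := by
        refine ⟨bot_le, bot_le, fun m hmx hma _ => ?_⟩
        rcases hma.lt_or_eq with hlt | heq
        · exact ha.2 m hlt
        · exact absurd (heq ▸ hmx) hax
      have h3 := h.M3 x a u ⊥ hu hmlb
      have h1 := h.M1 a
      rw [natRank_atom ha] at h1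
      omega
  refine ⟨part1, ?_, ?_⟩
  · have key : ∀ (T : Set S) (u v : S), u ∈ mubSet T → v ∈ mubSet T → ¬ ρ u < ρ v := by
      intro T u v hu hv hlt
      obtain ⟨a, ha, hav, hau, -⟩ := h.M5 u v hlt
      obtain ⟨t, htT, hat⟩ := atom_le_of_mem_mubSet h.simplicial hv ha hav
      exact hau (hat.trans (hu.1 t htT))
    intro T u v hu hv
    exact le_antisymm (not_lt.1 (key T v u hv hu)) (not_lt.1 (key T u v hu hv))
  · intro u v hu hv
    rcases lt_trichotomy (ρ u) (ρ v) with hlt | heq | hlt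
    · obtain ⟨a, ha, hav, hau, w, hw⟩ := h.M5 u v hlt
      exact absurd (hw.2.1.trans (hu hw.1)) hau
    · exact heq
    · obtain ⟨a, ha, hav, hau, w, hw⟩ := h.M5 v u hlt
      exact absurd (hw.2.1.trans (hv hw.1)) hau
end

section
/- Let (S, ρ) be a matroid scheme and let r ∈ ℤ≥0. If x and y are distinct maximal elements of the set ρ⁻¹(r) = {z ∈ S : ρ(z) = r}, and ℓ ∈ x∧y, then ρ(ℓ) < r. -/
/-- Lemma 5.1: distinct maximal elements of `ρ⁻¹(r)` have all their maximal
lower bounds of rank `< r`. -/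
theorem statement1 {S : Type*} [PartialOrder S] [OrderBot S] [Fintype S]
    (ρ : S → ℕ) (h : IsMatroidScheme ρ) (r : ℕ) (x y l : S)
    (hx : ρ x = r) (hy : ρ y = r)
    (hxmax : ∀ z : S, ρ z = r → x ≤ z → z = x)
    (hymax : ∀ z : S, ρ z = r → y ≤ z → z = y)
    (hne : x ≠ y) (hl : l ∈ mlb x y) :
    ρ l < r := by
  have hle : ρ l ≤ r := hx ▸ h.M2 hl.1
  rcases lt_or_eq_of_le hle with hlt | heq
  · exact hlt
  · exfalso
    obtain ⟨u, hu⟩ := h.M4 x y l hl (hx.trans heq.symm)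
    have hur : ρ u = r := by
      have h1 : r ≤ ρ u := hx ▸ h.M2 hu.1
      have h2 : ρ u + ρ l ≤ ρ x + ρ y := h.M3 x y u l hu hl
      omega
    exact hne ((hxmax u hur hu.1).symm.trans (hymax u hur hu.2.1))
end

section
/- Let (S, ρ) be a matroid scheme and let x, y ∈ S. Then y ≤ cl(x) if and only if there exists u ∈ x∨y such that ρ(u) = ρ(x). -/
theorem exists_mem_mub_le {S : Type*} [PartialOrder S] [WellFoundedLT S] {x y w : S}
    (hx : x ≤ w) (hy : y ≤ w) : ∃ u ∈ mub x y, u ≤ w := by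
  obtain ⟨u, ⟨hxu, hyu, huw⟩, hmin⟩ :=
    wellFounded_lt.has_min {v | x ≤ v ∧ y ≤ v ∧ v ≤ w} ⟨w, hx, hy, le_rfl⟩
  exact ⟨u, ⟨hxu, hyu, fun v hxv hyv hvu =>
    hvu.eq_of_not_lt (hmin v ⟨hxv, hyv, hvu.trans huw⟩)⟩, huw⟩

/-- Lemma 5.3: `y ≤ cl x` iff some minimal upper bound of `x` and `y` has rank `ρ x`. -/
theorem statement2 {S : Type*} [PartialOrder S] [OrderBot S] [Fintype S]
    (ρ : S → ℕ) (h : IsMatroidScheme ρ) (cl : S → S) (hcl : IsClosureFun ρ cl)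
    (x y : S) :
    y ≤ cl x ↔ ∃ u ∈ mub x y, ρ u = ρ x := by
  obtain ⟨hx_cl, hρ_cl, hcl_max⟩ := hcl x
  constructor
  · intro hy
    obtain ⟨u, hu, hu_cl⟩ := exists_mem_mub_le hx_cl hy
    exact ⟨u, hu, le_antisymm ((h.M2 hu_cl).trans_eq hρ_cl) (h.M2 hu.1)⟩
  · rintro ⟨u, ⟨hxu, hyu, -⟩, hρu⟩
    exact hyu.trans (hcl_max u hxu hρu)
end

section
/- Let M = (S, ρ) be a matroid scheme. Then for every basis x ∈ B(M), ρ(x) equals the rank ρ(M) of the matroid scheme, i.e. ρ(x) = ρ(u) for any maximal element u of S. -/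
/-!
Above a basis `x` the rank function is constant: for `x < y` the Boolean interval below `y`
either has exactly one atom `b` outside `x`, and then (M3) gives `ρ y ≤ ρ x + 1`, with equality
impossible since `y` would be an independent element strictly above the basis `x`; or `y` is the
join of two smaller elements above `x` whose meet is `x`, and (M3) with induction gives
`ρ y ≤ ρ x`. In particular `ρ x = ρ m` for a maximal `m ≥ x`, and (M5) forces all maximal
elements to have the same rank, since an atom with a common upper bound with a maximal `m`
lies below `m`.
-/

section Boolean

variable {S : Type*} [PartialOrder S] {y : S}

lemma coe_symm_sup_mem_mub {L : Type*} [Lattice L] (e : Set.Iic y ≃o L) (p q : Set.Iic y) :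
    (e.symm (e p ⊔ e q) : S) ∈ mub (p : S) q := by
  refine ⟨show p ≤ e.symm _ from e.le_symm_apply.mpr le_sup_left,
    show q ≤ e.symm _ from e.le_symm_apply.mpr le_sup_right,
    fun v hpv hqv hvj => ?_⟩
  let v' : Set.Iic y := ⟨v, hvj.trans (e.symm _).2⟩
  have hle : e p ⊔ e q ≤ e v' :=
    sup_le (e.monotone (show p ≤ v' from hpv)) (e.monotone (show q ≤ v' from hqv))
  exact congrArg Subtype.val (le_antisymm (show v' ≤ _ from hvj) (e.symm_apply_le.mpr hle))

lemma coe_symm_inf_mem_mlb {L : Type*} [Lattice L] (e : Set.Iic y ≃o L) (p q : Set.Iic y) :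
    (e.symm (e p ⊓ e q) : S) ∈ mlb (p : S) q := by
  refine ⟨show e.symm _ ≤ p from e.symm_apply_le.mpr inf_le_left,
    show e.symm _ ≤ q from e.symm_apply_le.mpr inf_le_right,
    fun m hmp hmq hlm => ?_⟩
  let m' : Set.Iic y := ⟨m, hmp.trans p.2⟩
  have hle : e m' ≤ e p ⊓ e q :=
    le_inf (e.monotone (show m' ≤ p from hmp)) (e.monotone (show m' ≤ q from hmq))
  exact congrArg Subtype.val (le_antisymm (e.le_symm_apply.mpr hle) (show _ ≤ m' from hlm))

variable [OrderBot S]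

lemma bot_mem_mlb_of_isAtom {x a : S} (ha : IsAtom a) (hax : ¬ a ≤ x) : (⊥ : S) ∈ mlb x a :=
  ⟨bot_le, bot_le, fun m hmx hma _ => ha.2 m (hma.lt_of_ne fun h => hax (h ▸ hmx))⟩

lemma exists_mub_atom_or_mub_mlb {ι : Type*} (F : Set.Iic y ≃o Set ι) {x : S} (hxy : x < y) :
    (∃ b, IsAtom b ∧ ¬ b ≤ x ∧ y ∈ mub x b ∧ ∀ a, IsAtom a → a ≤ y → a ≤ x ∨ a = b) ∨
      ∃ z₁ z₂, x ≤ z₁ ∧ x ≤ z₂ ∧ z₁ < y ∧ z₂ < y ∧ y ∈ mub z₁ z₂ ∧ x ∈ mlb z₁ z₂ := by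
  set x' : Set.Iic y := ⟨x, hxy.le⟩
  have hlt_top {z : Set.Iic y} (hz : F z ≠ Set.univ) : (z : S) < y :=
    lt_of_le_of_ne z.2 fun h => hz (map_eq_top_iff F |>.mpr (Set.Iic.eq_top_iff.mpr h))
  have hsymm_univ : (F.symm Set.univ : S) = y := by rw [← Set.top_eq_univ, F.symm.map_top]; rfl
  obtain ⟨α, hα⟩ : ∃ α, α ∉ F x' := Set.ne_univ_iff_exists_notMem _ |>.mp
    fun h => hxy.ne (Set.Iic.eq_top_iff.mp (map_eq_top_iff F |>.mp h))
  set b := F.symm {α}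
  have hFb : F b = {α} := F.apply_symm_apply _
  have hbx : ¬ (b : S) ≤ x := fun hle =>
    hα (F.monotone (show b ≤ x' from hle) (hFb ▸ Set.mem_singleton α))
  by_cases hcov : F x' ⊔ F b = Set.univ
  · have hb : IsAtom b := (F.symm.isAtom_iff _).mpr (Set.isAtom_singleton α)
    refine .inl ⟨b, hb.of_isAtom_coe_Iic, hbx,
      by simpa [hcov, hsymm_univ] using coe_symm_sup_mem_mub F x' b, fun a ha hay => ?_⟩
    obtain ⟨β, hβ⟩ := Set.isAtom_iff.mp ((F.isAtom_iff _).mpr (ha.Iic hay))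
    by_cases hβα : β = α
    · exact .inr (congrArg Subtype.val (F.injective (hβ.trans (hβα ▸ hFb.symm))))
    · have hβx : β ∈ F x' := by
        have : β ∈ F x' ⊔ F b := hcov ▸ Set.mem_univ β
        simpa [hFb, hβα] using this
      exact .inl (show (⟨a, hay⟩ : Set.Iic y) ≤ x' from
        F.le_iff_le.mp (hβ ▸ Set.singleton_subset_iff.mpr hβx))
  · set z₁ := F.symm (F x' ⊔ F b)
    set z₂ := F.symm {α}ᶜ
    have hFz₁ : F z₁ = F x' ⊔ F b := F.apply_symm_apply _
    have hFz₂ : F z₂ = {α}ᶜ := F.apply_symm_apply _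
    have hsup : F z₁ ⊔ F z₂ = Set.univ := by
      rw [hFz₁, hFz₂, hFb]; ext γ; by_cases γ = α <;> simp_all
    have hinf : F z₁ ⊓ F z₂ = F x' := by
      rw [hFz₁, hFz₂, hFb]; ext γ; by_cases γ = α <;> simp_all
    refine .inr ⟨z₁, z₂, show x' ≤ z₁ from F.le_symm_apply.mpr le_sup_left,
      F.le_iff_le.mp (show F x' ≤ F z₂ from hinf ▸ inf_le_right), hlt_top (hFz₁ ▸ hcov),
      hlt_top (by rw [hFz₂]; exact Set.compl_ne_univ.mpr (Set.singleton_nonempty α)),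
      by simpa [hsup, hsymm_univ] using coe_symm_sup_mem_mub F z₁ z₂,
      by simpa [hinf] using coe_symm_inf_mem_mlb F z₁ z₂⟩

end Boolean

section natRank

variable {S : Type*} [PartialOrder S] [OrderBot S]

lemma natRank_bot : natRank (⊥ : S) = 0 :=
  have : IsEmpty {a : S // IsAtom a ∧ a ≤ ⊥} := ⟨fun a => a.2.1.1 (le_bot_iff.mp a.2.2)⟩
  Nat.card_of_isEmpty

lemma IsAtom.natRank_eq_one {a : S} (ha : IsAtom a) : natRank a = 1 := by
  have : Unique {b : S // IsAtom b ∧ b ≤ a} :=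
    { default := ⟨a, ha, le_rfl⟩
      uniq := fun b => Subtype.ext (b.2.2.lt_or_eq.resolve_left fun h => b.2.1.1 (ha.2 _ h)) }
  exact Nat.card_unique

lemma natRank_le_natRank_add_one [Finite S] {x y b : S}
    (hy : ∀ a, IsAtom a → a ≤ y → a ≤ x ∨ a = b) : natRank y ≤ natRank x + 1 := by
  change {a | IsAtom a ∧ a ≤ y}.ncard ≤ {a | IsAtom a ∧ a ≤ x}.ncard + 1
  refine (Set.ncard_le_ncard fun a (ha : IsAtom a ∧ a ≤ y) => ?_).trans
    (Set.ncard_insert_le b _)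
  rcases hy a ha.1 ha.2 with hax | rfl
  exacts [.inr ⟨ha.1, hax⟩, .inl rfl]

end natRank

namespace IsMatroidScheme

variable {S : Type*} [PartialOrder S] [OrderBot S] [Fintype S] {ρ : S → ℕ}

lemma rho_le_of_mem_mub_isAtom (h : IsMatroidScheme ρ) {x y b : S} (hx : x ∈ Bases ρ)
    (hb : IsAtom b) (hbx : ¬ b ≤ x) (hy : y ∈ mub x b) (hrank : natRank y ≤ natRank x + 1) :
    ρ y ≤ ρ x := by
  have hsub := h.M3 x b y ⊥ hy (bot_mem_mlb_of_isAtom hb hbx)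
  have hρb : ρ b ≤ 1 := (h.M1 b).trans_eq hb.natRank_eq_one
  by_contra! hlt
  have hindep : ρ y = natRank y := le_antisymm (h.M1 y) (by rw [hx.1] at hlt; omega)
  exact hbx (hx.2 y hindep hy.1 ▸ hy.2.1)

lemma rho_eq_of_basis_le (h : IsMatroidScheme ρ) {x y : S} (hx : x ∈ Bases ρ) (hxy : x ≤ y) :
    ρ y = ρ x := by
  induction y using WellFoundedLT.induction with
  | _ y IH =>
  rcases hxy.eq_or_lt with rfl | hlt
  · rfl
  obtain ⟨F⟩ := h.simplicial y
  refine le_antisymm ?_ (h.M2 hxy)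
  rcases exists_mub_atom_or_mub_mlb F hlt with
    ⟨b, hb, hbx, hmub, hatoms⟩ | ⟨z₁, z₂, hxz₁, hxz₂, hz₁, hz₂, hmub, hmlb⟩
  · exact h.rho_le_of_mem_mub_isAtom hx hb hbx hmub (natRank_le_natRank_add_one hatoms)
  · have hsub := h.M3 z₁ z₂ y x hmub hmlb
    rw [IH z₁ hz₁ hxz₁, IH z₂ hz₂ hxz₂] at hsub
    omega

lemma rho_le_of_isMax (h : IsMatroidScheme ρ) {m : S} (hm : IsMax m) (u : S) : ρ u ≤ ρ m := by
  by_contra! hlt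
  obtain ⟨a, -, -, ham, w, hmw, haw, -⟩ := h.M5 m u hlt
  exact ham (haw.trans (hm hmw))

end IsMatroidScheme

/-- Corollary 6.4: every basis of a matroid scheme has rank equal to the rank of
the matroid scheme, i.e. to `ρ u` for any maximal element `u` of `S`. -/
theorem statement8 {S : Type*} [PartialOrder S] [OrderBot S] [Fintype S]
    (ρ : S → ℕ) (h : IsMatroidScheme ρ) (x : S) (hx : x ∈ Bases ρ)
    (u : S) (hu : IsMax u) :
    ρ x = ρ u := by
  obtain ⟨m, hxm, hm⟩ := Finite.exists_le_maximal (p := fun _ : S => True) trivial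
  have hmax : IsMax m := fun z hz => hm.2 trivial hz
  rw [← h.rho_eq_of_basis_le hx hxm]
  exact le_antisymm (h.rho_le_of_isMax hu m) (h.rho_le_of_isMax hmax u)
end

section
/- Let M = (S, ρ) be a matroid scheme and a an atom of S. Then the pair (S_{≱a}, ρ|_{S_{≱a}}), where S_{≱a} = {x ∈ S : x ≱ a}, is a matroid scheme; moreover its rank equals ρ(M) − 1 if a is an isthmus of M, and equals ρ(M) otherwise. -/
set_option linter.unusedSectionVars false
namespace MSAux

variable {S : Type*} [PartialOrder S] [OrderBot S] [Fintype S]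

lemma symm_bot (x : S) (f : Set.Iic x ≃o Set {a : S // IsAtom a ∧ a ≤ x}) :
    f.symm ∅ = ⟨⊥, bot_le⟩ := by
  have h : f.symm ∅ ≤ ⟨⊥, bot_le⟩ := f.symm_apply_le.mpr (by simp)
  refine le_antisymm h ?_
  exact bot_le (a := (f.symm ∅).val)

lemma symm_top (x : S) (f : Set.Iic x ≃o Set {a : S // IsAtom a ∧ a ≤ x}) :
    f.symm Set.univ = ⟨x, le_refl x⟩ := by
  have h : (⟨x, le_refl x⟩ : Set.Iic x) ≤ f.symm Set.univ :=
    f.le_symm_apply.mpr (by simp)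
  have h2 : (f.symm Set.univ).val ≤ x := (f.symm Set.univ).2
  exact le_antisymm h2 h

lemma f_bot (x : S) (f : Set.Iic x ≃o Set {a : S // IsAtom a ∧ a ≤ x}) :
    f ⟨⊥, bot_le⟩ = ∅ := by
  rw [← symm_bot x f, f.apply_symm_apply]

lemma f_top (x : S) (f : Set.Iic x ≃o Set {a : S // IsAtom a ∧ a ≤ x}) :
    f ⟨x, le_refl x⟩ = Set.univ := by
  rw [← symm_top x f, f.apply_symm_apply]


lemma f_atom (x : S) (f : Set.Iic x ≃o Set {a : S // IsAtom a ∧ a ≤ x})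
    {c : S} (hc : IsAtom c) (hcx : c ≤ x) :
    ∃ α, f ⟨c, hcx⟩ = {α} := by
  rcases Set.eq_empty_or_nonempty (f ⟨c, hcx⟩) with he | ⟨α, hα⟩
  · exfalso
    have h1 : (⟨c, hcx⟩ : Set.Iic x) = f.symm ∅ := by
      rw [← he]; exact (f.symm_apply_apply _).symm
    rw [symm_bot] at h1
    exact hc.1 (congrArg Subtype.val h1)
  · refine ⟨α, ?_⟩
    have h1 : f.symm {α} ≤ ⟨c, hcx⟩ :=
      f.symm_apply_le.mpr (Set.singleton_subset_iff.mpr hα)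
    have h2 : (f.symm {α}).val = c := by
      rcases eq_or_lt_of_le (show (f.symm {α}).val ≤ c from h1) with h | h
      · exact h
      · exfalso
        have hb : (f.symm {α}).val = ⊥ := hc.2 _ h
        have h3 : f.symm {α} = (⟨⊥, bot_le⟩ : Set.Iic x) := Subtype.ext hb
        have h4 : ({α} : Set _) = ∅ := by
          calc ({α} : Set _) = f (f.symm {α}) := (f.apply_symm_apply _).symm
          _ = f ⟨⊥, bot_le⟩ := by rw [h3]
          _ = ∅ := f_bot x f
        simp at h4
    have h3 : f.symm {α} = ⟨c, hcx⟩ := Subtype.ext h2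
    calc f ⟨c, hcx⟩ = f (f.symm {α}) := by rw [h3]
    _ = {α} := f.apply_symm_apply _

lemma symm_singleton_atom (x : S) (f : Set.Iic x ≃o Set {a : S // IsAtom a ∧ a ≤ x})
    (α : {a : S // IsAtom a ∧ a ≤ x}) :
    IsAtom ((f.symm {α}).val) := by
  constructor
  · intro hbot
    have h1 : f.symm {α} = (⟨⊥, bot_le⟩ : Set.Iic x) := Subtype.ext hbot
    have h2 := congrArg f h1
    rw [f.apply_symm_apply, f_bot] at h2
    simp at h2
  · intro z hz
    have hzx : z ≤ x := le_trans hz.le (f.symm {α}).2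
    have h1 : f ⟨z, hzx⟩ ⊆ {α} := by
      have h0 : (⟨z, hzx⟩ : Set.Iic x) ≤ f.symm {α} := hz.le
      exact f.le_symm_apply.mp h0
    rcases Set.subset_singleton_iff_eq.mp h1 with h | h
    · have h2 : (⟨z, hzx⟩ : Set.Iic x) = f.symm ∅ := by
        rw [← h]; exact (f.symm_apply_apply _).symm
      rw [symm_bot] at h2
      exact congrArg Subtype.val h2
    · exfalso
      have h2 : (⟨z, hzx⟩ : Set.Iic x) = f.symm {α} := by
        rw [← h]; exact (f.symm_apply_apply _).symm
      exact hz.ne (congrArg Subtype.val h2)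

lemma natRank_card (x : S) (f : Set.Iic x ≃o Set {a : S // IsAtom a ∧ a ≤ x})
    (w : Set.Iic x) : natRank (w : S) = Nat.card (f w) := by
  apply Nat.card_congr
  refine Equiv.ofBijective
    (fun c => ⟨(f_atom x f c.2.1 (le_trans c.2.2 w.2)).choose, ?_⟩) ⟨?_, ?_⟩
  · have hs := (f_atom x f c.2.1 (le_trans c.2.2 w.2)).choose_spec
    have hle : (⟨c.1, le_trans c.2.2 w.2⟩ : Set.Iic x) ≤ w := c.2.2
    have hsub : f ⟨c.1, le_trans c.2.2 w.2⟩ ⊆ f w := f.monotone hle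
    rw [hs] at hsub
    exact hsub rfl
  · intro c c' hcc
    have hs := (f_atom x f c.2.1 (le_trans c.2.2 w.2)).choose_spec
    have hs' := (f_atom x f c'.2.1 (le_trans c'.2.2 w.2)).choose_spec
    have heq : (f_atom x f c.2.1 (le_trans c.2.2 w.2)).choose
        = (f_atom x f c'.2.1 (le_trans c'.2.2 w.2)).choose := congrArg Subtype.val hcc
    rw [heq, ← hs'] at hs
    have h6 := f.injective hs
    exact Subtype.ext (congrArg (fun (t : Set.Iic x) => t.val) h6)
  · rintro ⟨β, hβ⟩
    have hle : f.symm {β} ≤ w := f.symm_apply_le.mpr (Set.singleton_subset_iff.mpr hβ)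
    have hat := symm_singleton_atom x f β
    have hle' : (f.symm {β}).val ≤ (w : S) := hle
    refine ⟨⟨(f.symm {β}).val, hat, hle'⟩, ?_⟩
    apply Subtype.ext
    show (f_atom x f hat (le_trans hle' w.2)).choose = β
    have hs := (f_atom x f hat (le_trans hle' w.2)).choose_spec
    have hmk : (⟨(f.symm {β}).val, le_trans hle' w.2⟩ : Set.Iic x) = f.symm {β} :=
      Subtype.ext rfl
    have h5 : ({(f_atom x f hat (le_trans hle' w.2)).choose} : Set _) = {β} := by
      calc ({(f_atom x f hat (le_trans hle' w.2)).choose} : Set _)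
          = f ⟨(f.symm {β}).val, le_trans hle' w.2⟩ := hs.symm
        _ = f (f.symm {β}) := congrArg f hmk
        _ = {β} := f.apply_symm_apply _
    exact Set.singleton_eq_singleton_iff.mp h5

lemma natRank_symm (x : S) (f : Set.Iic x ≃o Set {a : S // IsAtom a ∧ a ≤ x})
    (T : Set {a : S // IsAtom a ∧ a ≤ x}) :
    natRank ((f.symm T : Set.Iic x) : S) = T.ncard := by
  rw [natRank_card x f (f.symm T), f.apply_symm_apply, Nat.card_coe_set_eq]


lemma mem_mub_symm (x : S) (f : Set.Iic x ≃o Set {a : S // IsAtom a ∧ a ≤ x})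
    (T T' : Set {a : S // IsAtom a ∧ a ≤ x}) :
    ((f.symm (T ∪ T') : Set.Iic x) : S) ∈ mub ((f.symm T : Set.Iic x) : S) ((f.symm T' : Set.Iic x) : S) := by
  refine ⟨?_, ?_, ?_⟩
  · exact Subtype.coe_le_coe.mpr (f.symm.monotone Set.subset_union_left)
  · exact Subtype.coe_le_coe.mpr (f.symm.monotone Set.subset_union_right)
  · intro v h1 h2 h3
    have hvx : v ≤ x := le_trans h3 (f.symm (T ∪ T')).2
    have hT : T ⊆ f ⟨v, hvx⟩ := f.symm_apply_le.mp (show f.symm T ≤ ⟨v, hvx⟩ from h1)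
    have hT' : T' ⊆ f ⟨v, hvx⟩ := f.symm_apply_le.mp (show f.symm T' ≤ ⟨v, hvx⟩ from h2)
    have hsub : f ⟨v, hvx⟩ ⊆ T ∪ T' :=
      f.le_symm_apply.mp (show (⟨v, hvx⟩ : Set.Iic x) ≤ f.symm (T ∪ T') from h3)
    have he : f ⟨v, hvx⟩ = T ∪ T' := le_antisymm hsub (Set.union_subset hT hT')
    have : (⟨v, hvx⟩ : Set.Iic x) = f.symm (T ∪ T') := by
      rw [← he]; exact (f.symm_apply_apply _).symm
    exact congrArg Subtype.val this

lemma mem_mlb_symm (x : S) (f : Set.Iic x ≃o Set {a : S // IsAtom a ∧ a ≤ x})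
    (T T' : Set {a : S // IsAtom a ∧ a ≤ x}) :
    ((f.symm (T ∩ T') : Set.Iic x) : S) ∈ mlb ((f.symm T : Set.Iic x) : S) ((f.symm T' : Set.Iic x) : S) := by
  refine ⟨?_, ?_, ?_⟩
  · exact Subtype.coe_le_coe.mpr (f.symm.monotone Set.inter_subset_left)
  · exact Subtype.coe_le_coe.mpr (f.symm.monotone Set.inter_subset_right)
  · intro m h1 h2 h3
    have hmx : m ≤ x := le_trans h1 (f.symm T).2
    have hT : f ⟨m, hmx⟩ ⊆ T := f.le_symm_apply.mp (show (⟨m, hmx⟩ : Set.Iic x) ≤ f.symm T from h1)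
    have hT' : f ⟨m, hmx⟩ ⊆ T' := f.le_symm_apply.mp (show (⟨m, hmx⟩ : Set.Iic x) ≤ f.symm T' from h2)
    have hsub : T ∩ T' ⊆ f ⟨m, hmx⟩ :=
      f.symm_apply_le.mp (show f.symm (T ∩ T') ≤ ⟨m, hmx⟩ from h3)
    have he : f ⟨m, hmx⟩ = T ∩ T' := le_antisymm (Set.subset_inter hT hT') hsub
    have : (⟨m, hmx⟩ : Set.Iic x) = f.symm (T ∩ T') := by
      rw [← he]; exact (f.symm_apply_apply _).symm
    exact congrArg Subtype.val this

variable {ρ : S → ℕ}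

lemma submod (h : IsMatroidScheme ρ) (x : S)
    (f : Set.Iic x ≃o Set {a : S // IsAtom a ∧ a ≤ x})
    (T T' : Set {a : S // IsAtom a ∧ a ≤ x}) :
    ρ ((f.symm (T ∪ T') : Set.Iic x) : S) + ρ ((f.symm (T ∩ T') : Set.Iic x) : S)
      ≤ ρ ((f.symm T : Set.Iic x) : S) + ρ ((f.symm T' : Set.Iic x) : S) :=
  h.M3 _ _ _ _ (mem_mub_symm x f T T') (mem_mlb_symm x f T T')

lemma natRank_bot : natRank (⊥ : S) = 0 := by
  haveI : IsEmpty {a : S // IsAtom a ∧ a ≤ ⊥} :=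
    ⟨fun a => a.2.1.1 (le_bot_iff.mp a.2.2)⟩
  exact Nat.card_of_isEmpty

lemma rho_bot (h : IsMatroidScheme ρ) : ρ (⊥ : S) = 0 := by
  have h1 := h.M1 (⊥ : S)
  rw [natRank_bot] at h1
  exact Nat.le_zero.mp h1

lemma natRank_atom {c : S} (hc : IsAtom c) : natRank c = 1 := by
  haveI : Unique {a : S // IsAtom a ∧ a ≤ c} := by
    refine ⟨⟨⟨c, hc, le_refl c⟩⟩, ?_⟩
    rintro ⟨d, hd, hdc⟩
    rcases hc.le_iff.mp hdc with h0 | h0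
    · exact absurd h0 hd.1
    · exact Subtype.ext h0
  exact Nat.card_unique

lemma rho_atom_le_one (h : IsMatroidScheme ρ) {c : S} (hc : IsAtom c) : ρ c ≤ 1 :=
  (natRank_atom hc) ▸ h.M1 c

lemma mub_atom_le (hS : IsSimplicialPoset S) {p q u : S} (hu : u ∈ mub p q)
    {c : S} (hc : IsAtom c) (hcu : c ≤ u) : c ≤ p ∨ c ≤ q := by
  obtain ⟨f⟩ := hS u
  have hp := hu.1
  have hq := hu.2.1
  have huniv : f ⟨p, hp⟩ ∪ f ⟨q, hq⟩ = Set.univ := by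
    set v := f.symm (f ⟨p, hp⟩ ∪ f ⟨q, hq⟩) with hv
    have h1 : p ≤ v.val :=
      (show (⟨p, hp⟩ : Set.Iic u) ≤ v from f.le_symm_apply.mpr Set.subset_union_left)
    have h2 : q ≤ v.val :=
      (show (⟨q, hq⟩ : Set.Iic u) ≤ v from f.le_symm_apply.mpr Set.subset_union_right)
    have h3 : v.val = u := hu.2.2 v.val h1 h2 v.2
    have h4 : v = (⟨u, le_refl u⟩ : Set.Iic u) := Subtype.ext h3
    calc f ⟨p, hp⟩ ∪ f ⟨q, hq⟩ = f v := (f.apply_symm_apply _).symm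
      _ = f ⟨u, le_refl u⟩ := congrArg f h4
      _ = Set.univ := f_top u f
  obtain ⟨α, hα⟩ := f_atom u f hc hcu
  have hmem : α ∈ f ⟨p, hp⟩ ∪ f ⟨q, hq⟩ := huniv ▸ Set.mem_univ α
  rcases hmem with hm | hm
  · left
    have hsub : f ⟨c, hcu⟩ ⊆ f ⟨p, hp⟩ := by
      rw [hα]; exact Set.singleton_subset_iff.mpr hm
    exact f.le_iff_le.mp hsub
  · right
    have hsub : f ⟨c, hcu⟩ ⊆ f ⟨q, hq⟩ := by
      rw [hα]; exact Set.singleton_subset_iff.mpr hm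
    exact f.le_iff_le.mp hsub

lemma natRank_lt (hS : IsSimplicialPoset S) {p q : S} (hpq : p < q) :
    natRank p < natRank q := by
  obtain ⟨f⟩ := hS q
  have h1 : natRank p = (f ⟨p, hpq.le⟩).ncard := by
    rw [natRank_card q f ⟨p, hpq.le⟩, Nat.card_coe_set_eq]
  have h2 : natRank q = (Set.univ : Set {a : S // IsAtom a ∧ a ≤ q}).ncard := by
    rw [Set.ncard_univ]; rfl
  rw [h1, h2]
  refine Set.ncard_lt_ncard ⟨Set.subset_univ _, ?_⟩ (Set.toFinite _)
  intro hsub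
  have he : f ⟨p, hpq.le⟩ = Set.univ := le_antisymm (Set.subset_univ _) hsub
  have h3 : (⟨p, hpq.le⟩ : Set.Iic q) = f.symm Set.univ := by
    rw [← he]; exact (f.symm_apply_apply _).symm
  rw [symm_top] at h3
  exact hpq.ne (congrArg Subtype.val h3)


lemma indep_of_no_single (h : IsMatroidScheme ρ) (x : S)
    (f : Set.Iic x ≃o Set {a : S // IsAtom a ∧ a ≤ x})
    (H : ∀ α : {a : S // IsAtom a ∧ a ≤ x},
      ρ ((f.symm ({α}ᶜ) : Set.Iic x) : S) + 1 ≤ ρ x) :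
    ρ x = natRank x := by
  classical
  letI : Fintype {a : S // IsAtom a ∧ a ≤ x} := Fintype.ofFinite _
  have key : ∀ T : Finset {a : S // IsAtom a ∧ a ≤ x},
      ρ ((f.symm ((↑T : Set _)ᶜ) : Set.Iic x) : S) + T.card ≤ ρ x := by
    intro T
    induction T using Finset.induction_on with
    | empty =>
      have e1 : (((∅ : Finset {a : S // IsAtom a ∧ a ≤ x}) : Set {a : S // IsAtom a ∧ a ≤ x})ᶜ) = Set.univ := by
        simp
      rw [e1, symm_top]
      simp
    | @insert β T hβT ih =>
      have hsub := submod h x f ((↑T : Set _)ᶜ) ({β}ᶜ)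
      have e1 : ((↑T : Set _)ᶜ) ∪ ({β}ᶜ) = Set.univ := by
        ext γ
        simp only [Set.mem_union, Set.mem_compl_iff, Set.mem_singleton_iff, Set.mem_univ,
          iff_true, Finset.coe_sort_coe, Finset.mem_coe]
        by_cases hγ : γ = β
        · left; rw [hγ]; exact hβT
        · right; exact hγ
      have e2 : ((↑T : Set _)ᶜ) ∩ ({β}ᶜ) = ((↑(insert β T) : Set _)ᶜ) := by
        ext γ
        simp only [Set.mem_inter_iff, Set.mem_compl_iff, Set.mem_singleton_iff,
          Finset.coe_insert, Set.mem_insert_iff, Finset.mem_coe]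
        tauto
      rw [e1, e2, symm_top] at hsub
      rw [show ((⟨x, le_refl x⟩ : Set.Iic x) : S) = x from rfl] at hsub
      have hH := H β
      rw [Finset.card_insert_of_notMem hβT]
      omega
  have hfin := key Finset.univ
  have e3 : (((Finset.univ : Finset {a : S // IsAtom a ∧ a ≤ x}) : Set {a : S // IsAtom a ∧ a ≤ x})ᶜ) = (∅ : Set {a : S // IsAtom a ∧ a ≤ x}) := by
    simp
  rw [e3, symm_bot] at hfin
  rw [show ((⟨(⊥ : S), bot_le⟩ : Set.Iic x) : S) = (⊥ : S) from rfl, rho_bot h] at hfin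
  have e4 : (Finset.univ : Finset {a : S // IsAtom a ∧ a ≤ x}).card = natRank x := by
    rw [Finset.card_univ]
    exact (Nat.card_eq_fintype_card (α := {a : S // IsAtom a ∧ a ≤ x})).symm
  rw [e4] at hfin
  exact le_antisymm (h.M1 x) (by omega)

lemma isMax_rho (h : IsMatroidScheme ρ) {u : S} (hu : IsMax u) (y : S) : ρ y ≤ ρ u := by
  by_contra hlt
  push_neg at hlt
  obtain ⟨c, hc, hcy, hcu, v, hv⟩ := h.M5 u y hlt
  exact hcu (le_trans hv.2.1 (hu hv.1))

lemma basis_up (h : IsMatroidScheme ρ) {b : S} (hb : b ∈ Bases ρ) :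
    ∀ v, b ≤ v → ρ v = ρ b := by
  suffices key : ∀ n, ∀ v, natRank v = n → b ≤ v → ρ v = ρ b by
    intro v hv; exact key (natRank v) v rfl hv
  intro n
  induction n using Nat.strong_induction_on with
  | _ n ih =>
  intro v hn hbv
  rcases eq_or_lt_of_le hbv with rfl | hlt
  · rfl
  obtain ⟨f⟩ := h.simplicial v
  set B := f ⟨b, hbv⟩ with hB
  have hfB : f.symm B = ⟨b, hbv⟩ := f.symm_apply_apply _
  have hBne : B ≠ Set.univ := by
    intro hBu
    apply hlt.ne
    have h3 : (⟨b, hbv⟩ : Set.Iic v) = f.symm Set.univ := by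
      rw [← hBu]; exact (f.symm_apply_apply _).symm
    rw [symm_top] at h3
    exact congrArg Subtype.val h3
  obtain ⟨α, hα⟩ := (Set.ne_univ_iff_exists_notMem _).mp hBne
  -- step 1 : rank of b plus new atom is still ρ b
  have hαB : B ∩ {α} = ∅ := by
    ext γ; simp only [Set.mem_inter_iff, Set.mem_singleton_iff, Set.mem_empty_iff_false,
      iff_false, not_and]
    intro hγ he; exact hα (he ▸ hγ)
  have sub1 := submod h v f B {α}
  rw [hαB, symm_bot, hfB] at sub1
  rw [show ((⟨(⊥ : S), bot_le⟩ : Set.Iic v) : S) = (⊥ : S) from rfl, rho_bot h,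
    show ((⟨b, hbv⟩ : Set.Iic v) : S) = b from rfl] at sub1
  have hup : ρ b ≤ ρ ((f.symm (B ∪ {α}) : Set.Iic v) : S) := by
    apply h.M2
    have : f.symm B ≤ f.symm (B ∪ {α}) := f.symm.monotone Set.subset_union_left
    rw [hfB] at this
    exact this
  have hatα : ρ ((f.symm ({α} : Set _) : Set.Iic v) : S) ≤ 1 :=
    rho_atom_le_one h (symm_singleton_atom v f α)
  have hrb : natRank b = B.ncard := by
    have := natRank_symm v f B
    rw [hfB] at this
    exact this
  have hw2 : ρ ((f.symm (B ∪ {α}) : Set.Iic v) : S) = ρ b := by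
    by_contra hne
    have heq1 : ρ ((f.symm (B ∪ {α}) : Set.Iic v) : S) = ρ b + 1 := by omega
    have hnr : natRank ((f.symm (B ∪ {α}) : Set.Iic v) : S) = B.ncard + 1 := by
      rw [natRank_symm v f (B ∪ {α}), Set.union_singleton,
        Set.ncard_insert_of_notMem hα (Set.toFinite _)]
    have hind : ρ ((f.symm (B ∪ {α}) : Set.Iic v) : S)
        = natRank ((f.symm (B ∪ {α}) : Set.Iic v) : S) := by
      rw [heq1, hnr, ← hrb, ← hb.1]
    have hup2 : b ≤ ((f.symm (B ∪ {α}) : Set.Iic v) : S) := by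
      have : f.symm B ≤ f.symm (B ∪ {α}) := f.symm.monotone Set.subset_union_left
      rw [hfB] at this
      exact this
    have := hb.2 _ hind hup2
    rw [this] at hnr
    rw [hrb] at hnr
    omega
  -- step 2 : remove α from v
  have hbv' : b ≤ ((f.symm ({α}ᶜ) : Set.Iic v) : S) := by
    have hsubB : B ⊆ ({α}ᶜ : Set _) := Set.subset_compl_singleton_iff.mpr hα
    have : f.symm B ≤ f.symm ({α}ᶜ) := f.symm.monotone hsubB
    rw [hfB] at this
    exact this
  have hcard : natRank ((f.symm ({α}ᶜ) : Set.Iic v) : S) < n := by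
    rw [natRank_symm v f ({α}ᶜ)]
    have h1 : ({α}ᶜ : Set {a : S // IsAtom a ∧ a ≤ v}).ncard
        = (Set.univ : Set {a : S // IsAtom a ∧ a ≤ v}).ncard - 1 := by
      rw [Set.compl_eq_univ_diff, Set.ncard_diff (Set.subset_univ _) (Set.toFinite _),
        Set.ncard_singleton]
    have h2 : (Set.univ : Set {a : S // IsAtom a ∧ a ≤ v}).ncard = n := by
      rw [Set.ncard_univ]; exact hn
    have h3 : 0 < n := by
      rw [← h2, Set.ncard_univ]
      exact Nat.card_pos_iff.mpr ⟨⟨α⟩, inferInstance⟩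
    omega
  have hv' := ih _ hcard ((f.symm ({α}ᶜ) : Set.Iic v) : S) rfl hbv'
  have sub2 := submod h v f (B ∪ {α}) ({α}ᶜ)
  have e1 : (B ∪ {α}) ∪ ({α}ᶜ) = Set.univ := by
    ext γ
    simp only [Set.mem_union, Set.mem_compl_iff, Set.mem_singleton_iff, Set.mem_univ, iff_true]
    by_cases hγ : γ = α
    · left; right; exact hγ
    · right; exact hγ
  have e2 : (B ∪ {α}) ∩ ({α}ᶜ) = B := by
    ext γ
    simp only [Set.mem_inter_iff, Set.mem_union, Set.mem_compl_iff, Set.mem_singleton_iff]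
    constructor
    · rintro ⟨h1 | h1, h2⟩
      · exact h1
      · exact absurd h1 h2
    · intro hγ
      exact ⟨Or.inl hγ, fun he => hα (he ▸ hγ)⟩
  rw [e1, e2, symm_top, hfB] at sub2
  rw [show ((⟨v, le_refl v⟩ : Set.Iic v) : S) = v from rfl,
    show ((⟨b, hbv⟩ : Set.Iic v) : S) = b from rfl] at sub2
  have hble : ρ b ≤ ρ v := h.M2 hbv
  omega

lemma basis_rho (h : IsMatroidScheme ρ) {b : S} (hb : b ∈ Bases ρ) {u : S}
    (hu : IsMax u) : ρ b = ρ u := by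
  obtain ⟨w, hbw, hw⟩ := Finite.exists_le_maximal (a := b) (p := fun _ => True) trivial
  have hwmax : IsMax w := fun z hz => hw.2 trivial hz
  have h1 : ρ w = ρ b := basis_up h hb w hbw
  have h2 : ρ w = ρ u := le_antisymm (isMax_rho h hu w) (isMax_rho h hwmax u)
  omega

lemma exists_indep (h : IsMatroidScheme ρ) (x : S) :
    ∃ y, y ≤ x ∧ ρ y = natRank y ∧ ρ y = ρ x := by
  suffices key : ∀ n, ∀ x : S, natRank x = n → ∃ y, y ≤ x ∧ ρ y = natRank y ∧ ρ y = ρ x by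
    exact key (natRank x) x rfl
  intro n
  induction n using Nat.strong_induction_on with
  | _ n ih =>
  intro x hn
  by_cases hx : ρ x = natRank x
  · exact ⟨x, le_refl x, hx, rfl⟩
  obtain ⟨f⟩ := h.simplicial x
  have hH : ¬ ∀ α : {a : S // IsAtom a ∧ a ≤ x},
      ρ ((f.symm ({α}ᶜ) : Set.Iic x) : S) + 1 ≤ ρ x := by
    intro H
    exact hx (indep_of_no_single h x f H)
  push_neg at hH
  obtain ⟨α, hα⟩ := hH
  have hle : ((f.symm ({α}ᶜ) : Set.Iic x) : S) ≤ x := (f.symm ({α}ᶜ)).2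
  have heq : ρ ((f.symm ({α}ᶜ) : Set.Iic x) : S) = ρ x :=
    le_antisymm (h.M2 hle) (by omega)
  have hcard : natRank ((f.symm ({α}ᶜ) : Set.Iic x) : S) < n := by
    rw [natRank_symm x f ({α}ᶜ)]
    have h1 : ({α}ᶜ : Set {a : S // IsAtom a ∧ a ≤ x}).ncard
        = (Set.univ : Set {a : S // IsAtom a ∧ a ≤ x}).ncard - 1 := by
      rw [Set.compl_eq_univ_diff, Set.ncard_diff (Set.subset_univ _) (Set.toFinite _),
        Set.ncard_singleton]
    have h2 : (Set.univ : Set {a : S // IsAtom a ∧ a ≤ x}).ncard = n := by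
      rw [Set.ncard_univ]; exact hn
    have h3 : 0 < n := by
      rw [← h2, Set.ncard_univ]
      exact Nat.card_pos_iff.mpr ⟨⟨α⟩, inferInstance⟩
    omega
  obtain ⟨y, hy1, hy2, hy3⟩ := ih _ hcard _ rfl
  exact ⟨y, le_trans hy1 hle, hy2, by rw [hy3, heq]⟩

lemma basis_of_indep_max (h : IsMatroidScheme ρ) {y u : S} (hu : IsMax u)
    (h1 : ρ y = natRank y) (h2 : ρ y = ρ u) : y ∈ Bases ρ := by
  refine ⟨h1, ?_⟩
  intro w hw hyw
  rcases eq_or_lt_of_le hyw with he | hlt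
  · exact he.symm
  exfalso
  have h3 : natRank y < natRank w := natRank_lt h.simplicial hlt
  have h4 : ρ w ≤ ρ u := isMax_rho h hu w
  have h5 : ρ y ≤ ρ w := h.M2 hyw
  omega

lemma exists_basis_le (h : IsMatroidScheme ρ) {x u : S} (hu : IsMax u)
    (hx : ρ x = ρ u) : ∃ b ∈ Bases ρ, b ≤ x := by
  obtain ⟨y, hy1, hy2, hy3⟩ := exists_indep h x
  exact ⟨y, basis_of_indep_max h hu hy2 (by rw [hy3, hx]), hy1⟩

lemma remove_atom (h : IsMatroidScheme ρ) {a x : S} (ha : IsAtom a) (hax : a ≤ x) :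
    ∃ x', x' ≤ x ∧ ¬ a ≤ x' ∧ ρ x ≤ ρ x' + 1 := by
  obtain ⟨f⟩ := h.simplicial x
  obtain ⟨α, hα⟩ := f_atom x f ha hax
  refine ⟨((f.symm ({α}ᶜ) : Set.Iic x) : S), (f.symm ({α}ᶜ)).2, ?_, ?_⟩
  · intro hle
    have h1 : f ⟨a, hax⟩ ⊆ ({α}ᶜ : Set _) :=
      f.le_symm_apply.mp (show (⟨a, hax⟩ : Set.Iic x) ≤ f.symm ({α}ᶜ) from hle)
    rw [hα] at h1
    exact (h1 rfl) rfl
  · have sub := submod h x f ({α}ᶜ) {α}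
    have e1 : ({α}ᶜ : Set _) ∪ {α} = Set.univ := Set.compl_union_self _
    have e2 : ({α}ᶜ : Set _) ∩ {α} = ∅ := Set.compl_inter_self _
    rw [e1, e2, symm_top, symm_bot] at sub
    rw [show ((⟨x, le_refl x⟩ : Set.Iic x) : S) = x from rfl,
      show ((⟨(⊥ : S), bot_le⟩ : Set.Iic x) : S) = (⊥ : S) from rfl, rho_bot h] at sub
    have h2 : ρ ((f.symm ({α} : Set _) : Set.Iic x) : S) ≤ 1 :=
      rho_atom_le_one h (symm_singleton_atom x f α)
    omega


def setOrderIso {α β : Type*} (e : α ≃ β) : Set α ≃o Set β where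
  toFun s := e.symm ⁻¹' s
  invFun t := e ⁻¹' t
  left_inv s := by ext z; simp
  right_inv t := by ext z; simp
  map_rel_iff' := by
    intro s t
    constructor
    · intro hsub z hz
      have h1 : e z ∈ e.symm ⁻¹' s := by simpa using hz
      have h2 := hsub h1
      simpa using h2
    · intro hsub z hz
      exact hsub hz

variable (a : S)

lemma del_dc {x y : S} (h1 : y ≤ x) (h2 : ¬ a ≤ x) : ¬ a ≤ y :=
  fun hay => h2 (hay.trans h1)

lemma del_mub (p q u : {x : S // ¬ a ≤ x}) :
    u ∈ mub p q ↔ u.val ∈ mub p.val q.val := by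
  constructor
  · rintro ⟨h1, h2, h3⟩
    refine ⟨h1, h2, fun v hv1 hv2 hv3 => ?_⟩
    have hv : ¬ a ≤ v := del_dc a hv3 u.2
    have h4 := h3 ⟨v, hv⟩ hv1 hv2 hv3
    exact congrArg Subtype.val h4
  · rintro ⟨h1, h2, h3⟩
    exact ⟨h1, h2, fun v hv1 hv2 hv3 => Subtype.ext (h3 v.val hv1 hv2 hv3)⟩

lemma del_mlb (p q l : {x : S // ¬ a ≤ x}) :
    l ∈ mlb p q ↔ l.val ∈ mlb p.val q.val := by
  constructor
  · rintro ⟨h1, h2, h3⟩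
    refine ⟨h1, h2, fun m hm1 hm2 hm3 => ?_⟩
    have hm : ¬ a ≤ m := del_dc a hm1 p.2
    have h4 := h3 ⟨m, hm⟩ hm1 hm2 hm3
    exact congrArg Subtype.val h4
  · rintro ⟨h1, h2, h3⟩
    exact ⟨h1, h2, fun m hm1 hm2 hm3 => Subtype.ext (h3 m.val hm1 hm2 hm3)⟩

variable [instB : OrderBot {x : S // ¬ a ≤ x}]

lemma del_atom (hbot : ((⊥ : {x : S // ¬ a ≤ x}) : S) = ⊥)
    (b : {x : S // ¬ a ≤ x}) : IsAtom b ↔ IsAtom b.val := by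
  constructor
  · intro hb
    constructor
    · intro hb0
      exact hb.1 (Subtype.ext (by rw [hbot]; exact hb0))
    · intro z hz
      have hz' : ¬ a ≤ z := del_dc a hz.le b.2
      have hlt : (⟨z, hz'⟩ : {x : S // ¬ a ≤ x}) < b := Subtype.coe_lt_coe.mp hz
      have h4 := hb.2 _ hlt
      have := congrArg Subtype.val h4
      rwa [hbot] at this
  · intro hb
    constructor
    · intro h0
      apply hb.1
      have := congrArg Subtype.val h0
      rwa [hbot] at this
    · intro z hz
      have h4 := hb.2 z.val (Subtype.coe_lt_coe.mpr hz)
      apply Subtype.ext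
      rw [hbot]
      exact h4

lemma del_natRank (hbot : ((⊥ : {x : S // ¬ a ≤ x}) : S) = ⊥)
    (x : {x : S // ¬ a ≤ x}) : natRank x = natRank x.val := by
  apply Nat.card_congr
  refine ⟨fun b => ⟨b.1.1, (del_atom a hbot b.1).mp b.2.1, Subtype.coe_le_coe.mpr b.2.2⟩,
    fun c => ⟨⟨c.1, del_dc a c.2.2 x.2⟩, (del_atom a hbot _).mpr c.2.1,
      Subtype.coe_le_coe.mp c.2.2⟩, fun b => rfl, fun c => rfl⟩

variable [Fintype {x : S // ¬ a ≤ x}]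

lemma del_simplicial (hbot : ((⊥ : {x : S // ¬ a ≤ x}) : S) = ⊥)
    (hS : IsSimplicialPoset S) :
    IsSimplicialPoset {x : S // ¬ a ≤ x} := by
  intro x
  obtain ⟨f⟩ := hS x.val
  have e1 : (Set.Iic x : Set {x : S // ¬ a ≤ x}) ≃o (Set.Iic x.val : Set S) := by
    refine ⟨⟨fun v => ⟨v.1.1, Subtype.coe_le_coe.mpr v.2⟩,
      fun w => ⟨⟨w.1, del_dc a w.2 x.2⟩, Subtype.coe_le_coe.mp w.2⟩,
      fun v => rfl, fun w => rfl⟩, ?_⟩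
    intro v w
    exact Iff.rfl
  have e : {b : S // IsAtom b ∧ b ≤ x.val} ≃ {b : {x : S // ¬ a ≤ x} // IsAtom b ∧ b ≤ x} :=
    ⟨fun c => ⟨⟨c.1, del_dc a c.2.2 x.2⟩, (del_atom a hbot _).mpr c.2.1,
        Subtype.coe_le_coe.mp c.2.2⟩,
      fun b => ⟨b.1.1, (del_atom a hbot b.1).mp b.2.1, Subtype.coe_le_coe.mpr b.2.2⟩,
      fun c => rfl, fun b => rfl⟩
  exact ⟨(e1.trans f).trans (setOrderIso e)⟩

lemma del_scheme (ha : IsAtom a) (hbot : ((⊥ : {x : S // ¬ a ≤ x}) : S) = ⊥)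
    (h : IsMatroidScheme ρ) :
    IsMatroidScheme (fun x : {x : S // ¬ a ≤ x} => ρ x.val) := by
  refine ⟨del_simplicial a hbot h.simplicial, ?_, ?_, ?_, ?_, ?_⟩
  · intro x
    rw [del_natRank a hbot x]
    exact h.M1 x.val
  · intro x y hxy
    exact h.M2 (Subtype.coe_le_coe.mpr hxy)
  · intro x y u l hu hl
    exact h.M3 _ _ _ _ ((del_mub a x y u).mp hu) ((del_mlb a x y l).mp hl)
  · intro x y l hl heq
    obtain ⟨u, hu⟩ := h.M4 x.val y.val l.val ((del_mlb a x y l).mp hl) heq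
    have hau : ¬ a ≤ u := fun hle => (mub_atom_le h.simplicial hu ha hle).elim x.2 y.2
    exact ⟨⟨u, hau⟩, (del_mub a x y ⟨u, hau⟩).mpr hu⟩
  · intro x y hlt
    obtain ⟨c, hc, hcy, hcx, u, hu⟩ := h.M5 x.val y.val hlt
    have hac : ¬ a ≤ c := by
      intro hle
      rcases hc.le_iff.mp hle with h0 | h0
      · exact ha.1 h0
      · exact y.2 (h0 ▸ hcy)
    have hau : ¬ a ≤ u := fun hle => (mub_atom_le h.simplicial hu ha hle).elim x.2 hac
    refine ⟨⟨c, hac⟩, (del_atom a hbot ⟨c, hac⟩).mpr hc, Subtype.coe_le_coe.mp hcy,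
      fun hle => hcx (Subtype.coe_le_coe.mpr hle), ⟨u, hau⟩,
      (del_mub a x ⟨c, hac⟩ ⟨u, hau⟩).mpr hu⟩

end MSAux

/-- Proposition 8.1: the deletion `M − a = (S_{≱a}, ρ|)` of a matroid scheme by an
atom `a` is a matroid scheme, of rank `ρ(M) − 1` if `a` is an isthmus and `ρ(M)`
otherwise. -/
theorem statement13 {S : Type*} [PartialOrder S] [OrderBot S] [Fintype S]
    (ρ : S → ℕ) (h : IsMatroidScheme ρ) (a : S) (ha : IsAtom a) :
    letI : OrderBot {x : S // ¬ a ≤ x} :=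
      { bot := ⟨⊥, fun hab => ha.1 (le_bot_iff.mp hab)⟩
        bot_le := fun x => by exact bot_le (a := x.val) }
    letI : Fintype {x : S // ¬ a ≤ x} := Fintype.ofFinite _
    IsMatroidScheme (fun x : {x : S // ¬ a ≤ x} => ρ x.val) ∧
    (∀ u : S, IsMax u → ∀ m : {x : S // ¬ a ≤ x}, IsMax m →
      ((∀ b ∈ Bases ρ, a ≤ b) → ρ m.val = ρ u - 1) ∧
      (¬ (∀ b ∈ Bases ρ, a ≤ b) → ρ m.val = ρ u)) := by
  letI instB : OrderBot {x : S // ¬ a ≤ x} :=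
    { bot := ⟨⊥, fun hab => ha.1 (le_bot_iff.mp hab)⟩
      bot_le := fun x => by exact bot_le (a := x.val) }
  letI instF : Fintype {x : S // ¬ a ≤ x} := Fintype.ofFinite _
  have hbot : ((⊥ : {x : S // ¬ a ≤ x}) : S) = ⊥ := rfl
  have hscheme := MSAux.del_scheme a ha hbot h
  refine ⟨hscheme, ?_⟩
  intro u hu m hm
  have hmax' : ∀ z : {x : S // ¬ a ≤ x}, ρ z.val ≤ ρ m.val :=
    fun z => MSAux.isMax_rho hscheme hm z
  have hmaxS : ∀ z : S, ρ z ≤ ρ u := fun z => MSAux.isMax_rho h hu z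
  constructor
  · intro hI
    have hne : ρ m.val ≠ ρ u := by
      intro heq
      obtain ⟨b, hb, hbm⟩ := MSAux.exists_basis_le h hu heq
      exact m.2 (le_trans (hI b hb) hbm)
    obtain ⟨y, hyu, hy1, hy2⟩ := MSAux.exists_indep h u
    have hyB : y ∈ Bases ρ := MSAux.basis_of_indep_max h hu hy1 hy2
    have hay : a ≤ y := hI y hyB
    obtain ⟨x', hx'y, hax', hxx⟩ := MSAux.remove_atom h ha hay
    have h1 : ρ x' ≤ ρ m.val := hmax' ⟨x', hax'⟩
    have h2 : ρ m.val ≤ ρ u := hmaxS m.val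
    omega
  · intro hNI
    push_neg at hNI
    obtain ⟨b, hb, hab⟩ := hNI
    have h1 : ρ b = ρ u := MSAux.basis_rho h hb hu
    have h2 : ρ b ≤ ρ m.val := hmax' ⟨b, hab⟩
    have h3 : ρ m.val ≤ ρ u := hmaxS m.val
    omega
end
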